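/- If Q ⊨ Δ ≤ Δ' and Q ⊨ Δ = Δ₁ + Δ₂, then there exist Δ₁' and Δ₂' such that Q ⊨ Δ' = Δ₁' + Δ₂', Q ⊨ Δ₁ ≤ Δ₁', and Q ⊨ Δ₂ ≤ Δ₂'. -/
import Mathlib


/-- The multiplicity set {1, ω}. -/
inductive M where
  | one : M
  | omega : M
deriving DecidableEq, Repr

/-- Multiplication: 1 is identity, ω is absorbing. -/
def M.mul : M → M → M
  | .one, m => m
  | .omega, _ => .omega

/-- The order ≤: reflexive closure of 1 ≤ ω. -/
def M.le (m₁ m₂ : M) : Prop := m₁ = m₂ ∨ (m₁ = .one ∧ m₂ = .omega)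

/-- A multiplicity atom: a variable or a constant. -/
inductive Atom where
  | var : ℕ → Atom
  | const : M → Atom
deriving DecidableEq

/-- Evaluate an atom under a valuation. -/
def evalAtom (θ : ℕ → M) : Atom → M
  | .var n => θ n
  | .const m => m

/-- Evaluate a product of atoms under a valuation. -/
def evalProd (θ : ℕ → M) (l : List Atom) : M :=
  (l.map (evalAtom θ)).foldr M.mul M.one

/-- A predicate μ ≤ ∏ᵢ νᵢ. -/
structure MPred where
  lhs : Atom
  rhs : List Atom

/-- Truth of a predicate under a valuation. -/
def MPred.holds (θ : ℕ → M) (p : MPred) : Prop :=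
  (evalAtom θ p.lhs).le (evalProd θ p.rhs)

/-- A constraint: a finite conjunction of predicates. -/
abbrev MConstr := List MPred

/-- Truth of a constraint under a valuation. -/
def MConstr.holds (Q : MConstr) (θ : ℕ → M) : Prop := ∀ p ∈ Q, p.holds θ

def Atom.mentions (π : ℕ) : Atom → Prop
  | .var n => n = π
  | .const _ => False

def MPred.mentions (π : ℕ) (p : MPred) : Prop :=
  p.lhs.mentions π ∨ ∃ a ∈ p.rhs, a.mentions π

/-- A (symbolic) multiplicity environment: a partial map from variables to
multiplications of multiplicities (products of atoms). -/
abbrev MEnv := ℕ → Option (List Atom)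

/-- Evaluation of a symbolic multiplicity environment under a valuation. -/
def evalEnv (θ : ℕ → M) (Δ : MEnv) : ℕ → Option M := fun x => (Δ x).map (evalProd θ)

/-- Pointwise order on evaluated environments: dom(D₁) ⊆ dom(D₂),
D₁(x) ≤ D₂(x) on dom(D₁), and ω ≤ D₂(x) on dom(D₂)∖dom(D₁). -/
def leSem (D₁ D₂ : ℕ → Option M) : Prop :=
  ∀ x, match D₁ x, D₂ x with
  | some m₁, some m₂ => m₁.le m₂
  | none, some m₂ => M.omega.le m₂
  | some _, none => False
  | none, none => True

/-- Q ⊨ Δ₁ ≤ Δ₂. -/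
def entLE (Q : MConstr) (Δ₁ Δ₂ : MEnv) : Prop :=
  ∀ θ : ℕ → M, Q.holds θ → leSem (evalEnv θ Δ₁) (evalEnv θ Δ₂)

/-- Q ⊨ Δ₁ = Δ₂. -/
def entEq (Q : MConstr) (Δ₁ Δ₂ : MEnv) : Prop := entLE Q Δ₁ Δ₂ ∧ entLE Q Δ₂ Δ₁

/-- Sum of environments: ω on the intersection of domains. -/
def envAdd (Δ₁ Δ₂ : MEnv) : MEnv := fun x =>
  match Δ₁ x, Δ₂ x with
  | some _, some _ => some [Atom.const M.omega]
  | some l, none => some l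
  | none, some l => some l
  | none, none => none

/-- Scalar multiplication (μΔ)(x) = μ · Δ(x). -/
def envScale (μ : Atom) (Δ : MEnv) : MEnv := fun x => (Δ x).map (μ :: ·)

/-- Join of environments: Δ₁(x)·Δ₂(x) on the intersection of domains,
ω on the symmetric difference. -/
def envJoin (Δ₁ Δ₂ : MEnv) : MEnv := fun x =>
  match Δ₁ x, Δ₂ x with
  | some l₁, some l₂ => some (l₁ ++ l₂)
  | some _, none => some [Atom.const M.omega]
  | none, some _ => some [Atom.const M.omega]
  | none, none => none

lemma M.le_refl (m : M) : m.le m := Or.inl rfl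

lemma M.le_omega (m : M) : m.le .omega := by
  cases m <;> simp [M.le]

lemma M.omega_le (m : M) (h : M.omega.le m) : m = .omega := by
  cases m <;> simp_all [M.le]

lemma M.le_trans {a b c : M} (h₁ : a.le b) (h₂ : b.le c) : a.le c := by
  cases a <;> cases b <;> cases c <;> simp_all [M.le]

lemma evalProd_omega (θ : ℕ → M) : evalProd θ [Atom.const M.omega] = M.omega := rfl

theorem stmt12 : ∀ (Q : MConstr) (Δ Δ' Δ₁ Δ₂ : MEnv),
    entLE Q Δ Δ' → entEq Q Δ (envAdd Δ₁ Δ₂) →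
    ∃ Δ₁' Δ₂' : MEnv, entEq Q Δ' (envAdd Δ₁' Δ₂') ∧ entLE Q Δ₁ Δ₁' ∧ entLE Q Δ₂ Δ₂' := by
  intro Q Δ Δ' Δ₁ Δ₂ hle ⟨he1, he2⟩
  refine ⟨(fun x => match Δ₁ x with | some _ => Δ' x | none => none),
          (fun x => match Δ₂ x, Δ₁ x with | some _, _ => Δ' x | none, none => Δ' x | none, some _ => none),
          ⟨?_, ?_⟩, ?_, ?_⟩ <;>
  · intro θ hθ x
    have h1 := hle θ hθ x
    have h2 := he1 θ hθ x
    have h3 := he2 θ hθ x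
    simp only [evalEnv, envAdd, leSem] at *
    cases hx1 : Δ₁ x <;> cases hx2 : Δ₂ x <;> cases hx : Δ x <;> cases hx' : Δ' x <;>
      simp_all [M.le_refl, M.le_omega] <;>
      first
        | exact M.le_trans h3 (M.le_trans h2 h1)
        | exact M.le_trans h3 h1
        | (rw [M.omega_le _ (M.le_trans h3 h1)]; exact ⟨M.le_refl _, M.le_refl _⟩)

        | exact M.le_trans (M.le_omega _) (M.le_trans h3 h1)
        | exact M.le_omega _
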